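/- For n ≥ 4, the 1-nearly edge independence number of the complete graph K_n equals ⌊(n+1)/2⌋. -/

import Mathlib

open scoped Classical

/-- Two edges (as unordered pairs) share a vertex. -/
def ShareVertex {V : Type*} (e f : Sym2 V) : Prop := ∃ v, v ∈ e ∧ v ∈ f

/-- `M` is a 1-nearly edge independent set of `G`: a set of edges of `G` containing
exactly one pair of distinct edges sharing a common vertex. -/
def IsOneNearlyEdgeIndep {V : Type*} (G : SimpleGraph V) (M : Finset (Sym2 V)) : Prop :=
  ↑M ⊆ G.edgeSet ∧
    (M.offDiag.filter fun p => ShareVertex p.1 p.2).card = 2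

/-- The 1-nearly edge independence number `α'₁(G)`: maximum cardinality of a
1-nearly edge independent set, `0` if none exists. -/
noncomputable def edgeAlpha1 {V : Type*} (G : SimpleGraph V) : ℕ :=
  sSup {k | ∃ M : Finset (Sym2 V), IsOneNearlyEdgeIndep G M ∧ M.card = k}

/-- `I` is a 1-nearly vertex independent set of `G`: exactly one pair of distinct
vertices of `I` is adjacent in `G`. -/
def IsOneNearlyVertexIndep {V : Type*} (G : SimpleGraph V) (I : Finset V) : Prop :=
  (I.offDiag.filter fun p => G.Adj p.1 p.2).card = 2

/-- The 1-nearly vertex independence number `α₁(G)`. -/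
noncomputable def vertexAlpha1 {V : Type*} (G : SimpleGraph V) : ℕ :=
  sSup {k | ∃ I : Finset V, IsOneNearlyVertexIndep G I ∧ I.card = k}

/-!
Write `d v` for the number of edges of `M` at the vertex `v`. Then `∑ d v = 2 |M|`, while
`∑ d v (d v - 1)` counts ordered pairs of distinct edges of `M` meeting at a vertex (two distinct
edges meet in at most one vertex), so for a 1-nearly edge independent set it is at most `2`.
Since `2 d ≤ 2 + d (d - 1)` for every natural `d`, summing over the `n` vertices gives
`4 |M| ≤ 2 n + 2`. Conversely, on `n ≥ 3` vertices the path `a - b - c` together with a matching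
of `⌊(n - 3) / 2⌋` edges on the remaining vertices attains `⌊(n + 1) / 2⌋`.
-/

open Finset

noncomputable def sharingPairs {V : Type*} (M : Finset (Sym2 V)) : Finset (Sym2 V × Sym2 V) :=
  M.offDiag.filter fun p => ShareVertex p.1 p.2

theorem ShareVertex.symm {V : Type*} {e f : Sym2 V} (h : ShareVertex e f) : ShareVertex f e :=
  let ⟨v, he, hf⟩ := h; ⟨v, hf, he⟩

section

variable {V : Type*} {G : SimpleGraph V} {M : Finset (Sym2 V)}

theorem isOneNearlyEdgeIndep_iff :
    IsOneNearlyEdgeIndep G M ↔ ↑M ⊆ G.edgeSet ∧ #(sharingPairs M) = 2 :=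
  Iff.rfl

theorem sum_card_filter_mem [Fintype V] (hM : ∀ e ∈ M, ¬e.IsDiag) :
    ∑ v, #{e ∈ M | v ∈ e} = 2 * #M := by
  calc ∑ v, #{e ∈ M | v ∈ e} = ∑ e ∈ M, #{v | v ∈ e} :=
        sum_card_bipartiteAbove_eq_sum_card_bipartiteBelow _
    _ = ∑ _e ∈ M, 2 := sum_congr rfl fun e he => by
        rw [← e.card_toFinset_of_not_isDiag (hM e he)]
        congr 1
        ext
        simp [Sym2.mem_toFinset]
    _ = 2 * #M := by rw [sum_const, smul_eq_mul, mul_comm]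

theorem sum_card_offDiag_filter_mem_le [Fintype V] :
    ∑ v, #{e ∈ M | v ∈ e}.offDiag ≤ #(sharingPairs M) := by
  have hdisj : ((univ : Finset V) : Set V).PairwiseDisjoint fun v => {e ∈ M | v ∈ e}.offDiag := by
    intro v _ w _ hvw
    rw [Function.onFun, disjoint_left]
    rintro ⟨e, f⟩ hv hw
    simp only [mem_offDiag, mem_filter] at hv hw
    exact hv.2.2 (((Sym2.mem_and_mem_iff hvw).1 ⟨hv.1.2, hw.1.2⟩).trans
      ((Sym2.mem_and_mem_iff hvw).1 ⟨hv.2.1.2, hw.2.1.2⟩).symm)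
  rw [← card_biUnion hdisj]
  refine card_le_card fun p hp => ?_
  simp only [mem_biUnion, mem_univ, true_and, mem_offDiag, mem_filter] at hp
  obtain ⟨v, ⟨he, hve⟩, ⟨hf, hvf⟩, hne⟩ := hp
  exact mem_filter.2 ⟨mem_offDiag.2 ⟨he, hf, hne⟩, v, hve, hvf⟩

theorem four_mul_card_le [Fintype V] (hM : ∀ e ∈ M, ¬e.IsDiag) :
    4 * #M ≤ 2 * Fintype.card V + #(sharingPairs M) := by
  have hd : ∀ d : ℕ, 2 * d ≤ 2 + (d * d - d) := by
    rintro (_ | _ | d) <;> ring_nf <;> omega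
  calc 4 * #M = ∑ v, 2 * #{e ∈ M | v ∈ e} := by
        rw [← mul_sum, sum_card_filter_mem hM]; ring
    _ ≤ ∑ v, (2 + #{e ∈ M | v ∈ e}.offDiag) :=
        sum_le_sum fun v _ => by rw [offDiag_card]; exact hd _
    _ = 2 * Fintype.card V + ∑ v, #{e ∈ M | v ∈ e}.offDiag := by
        rw [sum_add_distrib, sum_const, card_univ, smul_eq_mul, mul_comm]
    _ ≤ 2 * Fintype.card V + #(sharingPairs M) := by
        gcongr
        exact sum_card_offDiag_filter_mem_le

theorem IsOneNearlyEdgeIndep.card_le [Fintype V] (h : IsOneNearlyEdgeIndep G M) :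
    #M ≤ (Fintype.card V + 1) / 2 := by
  have hcard := four_mul_card_le fun e he => G.not_isDiag_of_mem_edgeSet (h.1 he)
  have hpairs := (isOneNearlyEdgeIndep_iff.1 h).2
  omega

theorem card_sharingPairs_insert {e : Sym2 V} (he : e ∉ M) :
    #(sharingPairs (insert e M)) = #(sharingPairs M) + 2 * #{f ∈ M | ShareVertex e f} := by
  have hleft : #{p ∈ {e} ×ˢ M | ShareVertex p.1 p.2} = #{f ∈ M | ShareVertex e f} := by
    rw [singleton_product, filter_map, card_map]; rfl
  have hright : #{p ∈ M ×ˢ {e} | ShareVertex p.1 p.2} = #{f ∈ M | ShareVertex e f} := by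
    rw [product_singleton, filter_map, card_map]
    exact congrArg card (filter_congr fun f _ => ⟨ShareVertex.symm, ShareVertex.symm⟩)
  rw [sharingPairs, offDiag_insert he, filter_union, filter_union, card_union_of_disjoint,
    card_union_of_disjoint, hleft, hright, sharingPairs]
  · ring
  all_goals
    simp only [disjoint_left, mem_union, mem_filter, mem_offDiag, mem_product, mem_singleton]
    grind

theorem IsOneNearlyEdgeIndep.insert {a b : V} (h : IsOneNearlyEdgeIndep G M) (hab : G.Adj a b)
    (hfresh : ∀ e ∈ M, a ∉ e ∧ b ∉ e) : IsOneNearlyEdgeIndep G (insert s(a, b) M) := by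
  have hnotMem : s(a, b) ∉ M := fun hM => (hfresh _ hM).1 (Sym2.mem_mk_left a b)
  have hnoShare : {f ∈ M | ShareVertex s(a, b) f} = ∅ := by
    refine filter_eq_empty_iff.2 fun f hf ⟨v, hv, hvf⟩ => ?_
    rcases Sym2.mem_iff.1 hv with rfl | rfl
    exacts [(hfresh f hf).1 hvf, (hfresh f hf).2 hvf]
  refine isOneNearlyEdgeIndep_iff.2 ⟨?_, ?_⟩
  · rw [coe_insert, Set.insert_subset_iff]
    exact ⟨hab, h.1⟩
  · rw [card_sharingPairs_insert hnotMem, hnoShare]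
    exact h.2

theorem isOneNearlyEdgeIndep_pair {a b c : V} (hab : G.Adj a b) (hbc : G.Adj b c) (hac : a ≠ c) :
    IsOneNearlyEdgeIndep G {s(a, b), s(b, c)} := by
  have hne : s(a, b) ∉ ({s(b, c)} : Finset (Sym2 V)) := by
    simp [hab.ne, hac]
  have hshare : {f ∈ ({s(b, c)} : Finset (Sym2 V)) | ShareVertex s(a, b) f} = {s(b, c)} := by
    rw [filter_singleton, if_pos ⟨b, Sym2.mem_mk_right a b, Sym2.mem_mk_left b c⟩]
  refine isOneNearlyEdgeIndep_iff.2 ⟨?_, ?_⟩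
  · simp [Set.insert_subset_iff, hab, hbc]
  · rw [card_sharingPairs_insert hne, hshare, sharingPairs, offDiag_singleton]
    rfl

end

theorem exists_isOneNearlyEdgeIndep_top {V : Type*} (s : Finset V) (hs : 3 ≤ #s) :
    ∃ M : Finset (Sym2 V), IsOneNearlyEdgeIndep ⊤ M ∧ #M = (#s + 1) / 2 ∧ M ⊆ s.sym2 := by
  induction hcard : #s using Nat.strong_induction_on generalizing s with
  | _ m ih =>
  by_cases hm : m ≤ 4
  · obtain ⟨a, ha, b, hb, c, hc, hab, hac, hbc⟩ := two_lt_card.1 (by omega : 2 < #s)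
    refine ⟨_, isOneNearlyEdgeIndep_pair (G := ⊤) hab hbc hac, ?_, ?_⟩
    · rw [card_pair (by simp [hab, hac])]
      omega
    · simp [insert_subset_iff, ha, hb, hc]
  · obtain ⟨a, ha, b, hb, hab⟩ := one_lt_card.1 (by omega : 1 < #s)
    have hrest : #(s \ {a, b}) = m - 2 := by
      rw [card_sdiff_of_subset (insert_subset ha (singleton_subset_iff.2 hb)), card_pair hab, hcard]
    obtain ⟨M, hM, hMcard, hMsub⟩ := ih (m - 2) (by omega) (s \ {a, b}) (by omega) hrest
    have hfresh : ∀ e ∈ M, a ∉ e ∧ b ∉ e := fun e he => by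
      have hsub := mem_sym2_iff.1 (hMsub he)
      exact ⟨fun hae => by simpa using hsub a hae, fun hbe => by simpa using hsub b hbe⟩
    refine ⟨_, hM.insert hab hfresh, ?_, ?_⟩
    · rw [card_insert_of_notMem fun hM' => (hfresh _ hM').1 (Sym2.mem_mk_left a b)]
      omega
    · exact insert_subset (mk_mem_sym2_iff.2 ⟨ha, hb⟩) (hMsub.trans (sym2_mono sdiff_subset))

theorem edgeAlpha1_top {V : Type*} [Fintype V] (hV : 3 ≤ Fintype.card V) :
    edgeAlpha1 (⊤ : SimpleGraph V) = (Fintype.card V + 1) / 2 := by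
  obtain ⟨M, hM, hcard, -⟩ := exists_isOneNearlyEdgeIndep_top (univ : Finset V) hV
  rw [card_univ] at hcard
  exact IsGreatest.csSup_eq ⟨⟨M, hM, hcard⟩, by rintro _ ⟨M', hM', rfl⟩; exact hM'.card_le⟩

theorem edgeAlpha1_completeGraph {n : ℕ} (hn : 4 ≤ n) :
    edgeAlpha1 (⊤ : SimpleGraph (Fin n)) = (n + 1) / 2 := by
  rw [edgeAlpha1_top (by rw [Fintype.card_fin]; omega), Fintype.card_fin]
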